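/- Let G be an Abelian group and S a subgroup of Ĝ. Then (G, τ_S) contains no proper dense subgroup if and only if S is topologically essential in Ĝ, i.e., S ∩ L ≠ {0} for every nontrivial closed subgroup L of Ĝ. -/

import Mathlib

/-- The coarsest topology on `G` making every character in `S` continuous. -/
noncomputable def tauS {G : Type*} [AddCommGroup G]
    (S : AddSubgroup (G →+ AddCircle (1 : ℝ))) : TopologicalSpace G :=
  ⨅ φ ∈ S, TopologicalSpace.induced ⇑φ inferInstance

/-- The topology of pointwise convergence on the dual group `Ĝ`. -/
noncomputable def dualTop (G : Type*) [AddCommGroup G] :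
    TopologicalSpace (G →+ AddCircle (1 : ℝ)) :=
  TopologicalSpace.induced (fun φ => (φ : G → AddCircle (1 : ℝ))) Pi.topologicalSpace

/-- A group topology on `G` is totally bounded if it is Hausdorff, makes `G` a
topological group, and every neighborhood `U` of `0` satisfies `G = F + U` for
some finite `F`. -/
def IsTotallyBoundedGroupTopology {G : Type*} [AddCommGroup G]
    (t : TopologicalSpace G) : Prop :=
  @IsTopologicalAddGroup G t _ ∧ @T2Space G t ∧
    ∀ U ∈ @nhds G t 0, ∃ F : Set G, F.Finite ∧ ∀ g : G, ∃ f ∈ F, ∃ u ∈ U, g = f + u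

/-!
A character `ψ ∈ S` is `τ_S`-continuous, so it vanishes identically once it vanishes on a dense
subgroup `H`; if `H ≠ G`, the annihilator `H^⊥` is a closed subgroup of `Ĝ`, nontrivial because
`𝕋` is divisible, that meets `S` only in `0`. Conversely, if `L` is closed and `S ∩ L = 0`, the
annihilator `L^⊥ ≤ G` is `τ_S`-dense: a point `x` lies in its closure as soon as every `ψ ∈ S`
vanishing on `L^⊥` vanishes at `x`, and such `ψ` lie in `L^⊥⊥ = L`, hence are `0`.

Both closure statements hold because `τ_S` and the topology of `Ĝ` are induced from powers of `𝕋`,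
where a point outside a closed subgroup `K` of a finite torus is separated from `K` by a
character. For the torus, the Fourier coefficients of the `K`-periodic function `dist(·, K)` are
supported on characters trivial on `K`; if all of these were trivial at `x`, then `dist(· + x, K)`
and `dist(·, K)` would have the same Fourier coefficients, hence coincide, forcing `x ∈ K`.
-/

open MeasureTheory Metric Topology

local notation "𝕋" => AddCircle (1 : ℝ)

namespace UnitAddTorus

variable {ι : Type*} [Fintype ι]

lemma mFourier_apply_eq_toCircle (n : ι → ℤ) (y : UnitAddTorus ι) :
    mFourier n y = AddCircle.toCircle (∑ i, n i • y i) := by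
  classical
  simp only [mFourier, ContinuousMap.coe_mk, fourier_apply]
  induction (Finset.univ : Finset ι) using Finset.induction_on with
  | empty => simp
  | insert i s hi ih =>
    rw [Finset.prod_insert hi, Finset.sum_insert hi, AddCircle.toCircle_add, Circle.coe_mul, ih]

lemma mFourier_apply_eq_one_iff {n : ι → ℤ} {y : UnitAddTorus ι} :
    mFourier n y = 1 ↔ ∑ i, n i • y i = 0 := by
  rw [mFourier_apply_eq_toCircle, ← fourier_zero' (T := 1), Circle.coe_inj,
    (AddCircle.injective_toCircle one_ne_zero).eq_iff]

lemma mFourier_apply_add (n : ι → ℤ) (y z : UnitAddTorus ι) :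
    mFourier n (y + z) = mFourier n y * mFourier n z := by
  simp only [mFourier_apply_eq_toCircle, Pi.add_apply, smul_add, Finset.sum_add_distrib,
    AddCircle.toCircle_add, Circle.coe_mul]

variable {E : Type*} [NormedAddCommGroup E] [NormedSpace ℂ E]

-- `mFourierCoeff` integrates against `Measure.pi fun _ => haarAddCircle`, which Mathlib makes
-- `volume` only locally; below that measure has to be named explicitly.
lemma mFourierCoeff_comp_add_right (f : UnitAddTorus ι → E) (a : UnitAddTorus ι) (n : ι → ℤ) :
    mFourierCoeff (fun t => f (t + a)) n = mFourier n a • mFourierCoeff f n := by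
  have hchar (t : UnitAddTorus ι) : mFourier (-n) (t - a) = mFourier n a * mFourier (-n) t := by
    rw [sub_eq_add_neg, mFourier_apply_add, mul_comm]
    congr 1
    simp only [mFourier_apply_eq_toCircle, Pi.neg_apply, neg_smul, smul_neg, neg_neg]
  unfold mFourierCoeff
  have hshift := integral_add_right_eq_self (μ := Measure.pi fun _ => AddCircle.haarAddCircle)
    (fun t => mFourier (-n) (t - a) • f t) a
  simp only [add_sub_cancel_right] at hshift
  refine hshift.trans ?_
  simp only [hchar, mul_smul]
  exact integral_smul _ _

lemma mFourierCoeff_sub (f g : C(UnitAddTorus ι, E)) (n : ι → ℤ) :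
    mFourierCoeff (⇑(f - g)) n = mFourierCoeff f n - mFourierCoeff g n := by
  have hint (h : C(UnitAddTorus ι, E)) :
      Integrable (fun t => mFourier (-n) t • h t) (Measure.pi fun _ => AddCircle.haarAddCircle) :=
    (by fun_prop : Continuous _).integrable_of_hasCompactSupport (.of_compactSpace _)
  unfold mFourierCoeff
  simp only [ContinuousMap.sub_apply, smul_sub]
  exact integral_sub (hint f) (hint g)

lemma eq_zero_of_mFourierCoeff_eq_zero {f : C(UnitAddTorus ι, ℂ)}
    (hf : ∀ n, mFourierCoeff f n = 0) : f = 0 := by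
  have h0 : mFourierCoeff f = 0 := funext hf
  ext x
  have hs := hasSum_mFourier_series_apply_of_summable (f := f) (h0 ▸ summable_zero) x
  simp only [h0, Pi.zero_apply, zero_smul] at hs
  exact hs.unique hasSum_zero

theorem exists_sum_zsmul_ne_zero_of_notMem {K : AddSubgroup (UnitAddTorus ι)}
    (hK : IsClosed (K : Set (UnitAddTorus ι))) {x : UnitAddTorus ι} (hx : x ∉ K) :
    ∃ c : ι → ℤ, (∀ y ∈ K, ∑ i, c i • y i = 0) ∧ ∑ i, c i • x i ≠ 0 := by
  by_contra! hxc
  let f : C(UnitAddTorus ι, ℂ) := ⟨fun y => (infDist y K : ℂ), by fun_prop⟩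
  have hf_periodic (k : UnitAddTorus ι) (hk : k ∈ K) : (fun y => f (y + k)) = f := by
    ext y
    have hKk : (· + k) '' (K : Set (UnitAddTorus ι)) = K := by
      ext z; simp [Set.image_add_right, K.add_mem_cancel_right (K.neg_mem hk)]
    simp only [f, ContinuousMap.coe_mk]
    conv_lhs => rw [← hKk]
    exact congrArg _ (infDist_image (IsometryEquiv.addRight k).isometry)
  have hcoeff (n : ι → ℤ) (hn : mFourierCoeff f n ≠ 0) : mFourier n x = 1 := by
    refine mFourier_apply_eq_one_iff.2 (hxc n fun k hk => mFourier_apply_eq_one_iff.1 ?_)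
    have := mFourierCoeff_comp_add_right f k n
    rw [hf_periodic k hk, smul_eq_mul] at this
    exact (mul_eq_right₀ hn).1 this.symm
  let g : C(UnitAddTorus ι, ℂ) := f.comp (ContinuousMap.addRight x) - f
  have hg : g = 0 := by
    refine eq_zero_of_mFourierCoeff_eq_zero fun n => ?_
    rw [mFourierCoeff_sub, sub_eq_zero]
    change mFourierCoeff (fun t => f (t + x)) n = _
    rw [mFourierCoeff_comp_add_right, smul_eq_mul]
    by_cases hn : mFourierCoeff f n = 0
    · rw [hn, mul_zero]
    · rw [hcoeff n hn, one_mul]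
  have hdist : infDist x K = 0 := by
    simpa [g, f, infDist_zero_of_mem K.zero_mem] using congr($hg 0)
  exact hx ((hK.mem_iff_infDist_zero ⟨0, K.zero_mem⟩).2 hdist)

end UnitAddTorus

theorem exists_finset_sum_zsmul_ne_zero_of_notMem {ι : Type*} {K : AddSubgroup (ι → 𝕋)}
    (hK : IsClosed (K : Set (ι → 𝕋))) {x : ι → 𝕋} (hx : x ∉ K) :
    ∃ (s : Finset ι) (c : s → ℤ), (∀ y ∈ K, ∑ i, c i • y i = 0) ∧ ∑ i, c i • x i ≠ 0 := by
  have hKc := hK.isOpen_compl.mem_nhds hx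
  rw [nhds_pi, Filter.mem_pi'] at hKc
  obtain ⟨s, t, ht, hts⟩ := hKc
  let r : (ι → 𝕋) →+ (s → 𝕋) := AddMonoidHom.pi fun i => Pi.evalAddMonoidHom _ (i : ι)
  have hrx : r x ∉ (K.map r).topologicalClosure := by
    intro hmem
    obtain ⟨_, hz, y, hy, rfl⟩ := mem_closure_iff_nhds.1 hmem _
      (set_pi_mem_nhds Set.finite_univ fun i _ => ht i)
    exact hts (fun i hi => hz ⟨i, hi⟩ trivial) hy
  obtain ⟨c, hcK, hcx⟩ := UnitAddTorus.exists_sum_zsmul_ne_zero_of_notMem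
    (K.map r).isClosed_topologicalClosure hrx
  exact ⟨s, c, fun y hy => hcK (r y) ((K.map r).le_topologicalClosure ⟨y, hy, rfl⟩), hcx⟩

theorem mem_closure_of_forall_sum_zsmul_eq_zero {M ι : Type*} [AddCommGroup M]
    [TopologicalSpace M] {e : M →+ (ι → 𝕋)} (he : IsInducing e) {A : AddSubgroup M} {x : M}
    (hx : ∀ (s : Finset ι) (c : s → ℤ), (∀ a ∈ A, ∑ i, c i • e a i = 0) → ∑ i, c i • e x i = 0) :
    x ∈ closure (A : Set M) := by
  rw [he.closure_eq_preimage_closure_image]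
  by_contra hex
  obtain ⟨s, c, hcA, hcx⟩ := exists_finset_sum_zsmul_ne_zero_of_notMem
    (A.map e).isClosed_topologicalClosure hex
  exact hcx (hx s c fun a ha => hcA (e a) ((A.map e).le_topologicalClosure ⟨a, ha, rfl⟩))

theorem exists_addMonoidHom_addCircle_apply_ne_zero {A : Type*} [AddCommGroup A] {a : A}
    (ha : a ≠ 0) : ∃ χ : A →+ 𝕋, χ a ≠ 0 := by
  obtain ⟨c, hc⟩ := CharacterModule.exists_character_apply_ne_zero_of_ne_zero ha
  let j : AddCircle (1 : ℚ) →+ 𝕋 :=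
    QuotientAddGroup.map _ _ (Rat.castHom ℝ).toAddMonoidHom (by
      rintro _ ⟨n, rfl⟩
      exact ⟨n, by simp⟩)
  have hj : Function.Injective j := by
    rw [injective_iff_map_eq_zero]
    rintro ⟨q⟩ h
    obtain ⟨n, hn⟩ := (AddCircle.coe_eq_zero_iff _).1 h
    refine (AddCircle.coe_eq_zero_iff _).2 ⟨n, ?_⟩
    simp only [zsmul_one] at hn ⊢
    exact_mod_cast (by simpa using hn : (n : ℝ) = q)
  exact ⟨j.comp (c : A →+ AddCircle (1 : ℚ)), fun h => hc (hj (h.trans j.map_zero.symm))⟩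

namespace AddSubgroup

variable {G : Type*} [AddCommGroup G]

def dualAnnihilator (H : AddSubgroup G) : AddSubgroup (G →+ 𝕋) where
  carrier := {χ | ∀ h ∈ H, χ h = 0}
  zero_mem' _ _ := rfl
  add_mem' hχ hψ h hh := by simp [hχ h hh, hψ h hh]
  neg_mem' hχ h hh := by simp [hχ h hh]

def dualCoannihilator (L : AddSubgroup (G →+ 𝕋)) : AddSubgroup G where
  carrier := {g | ∀ χ ∈ L, χ g = 0}
  zero_mem' χ _ := χ.map_zero
  add_mem' ha hb χ hχ := by simp [ha χ hχ, hb χ hχ]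
  neg_mem' ha χ hχ := by simp [ha χ hχ]

theorem isClosed_dualAnnihilator (H : AddSubgroup G) :
    IsClosed[dualTop G] (H.dualAnnihilator : Set (G →+ 𝕋)) := by
  let _ := dualTop G
  have hH : (H.dualAnnihilator : Set (G →+ 𝕋)) = ⋂ h ∈ H, {χ | χ h = 0} := by
    ext χ
    simp [dualAnnihilator]
  rw [hH]
  exact isClosed_biInter fun h _ =>
    isClosed_eq ((continuous_apply h).comp continuous_induced_dom) continuous_const

theorem dualAnnihilator_ne_bot {H : AddSubgroup G} (hH : H ≠ ⊤) : H.dualAnnihilator ≠ ⊥ := by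
  obtain ⟨g, hg⟩ : ∃ g, g ∉ H := by simpa [eq_top_iff'] using hH
  obtain ⟨χ, hχ⟩ := exists_addMonoidHom_addCircle_apply_ne_zero
    (mt (QuotientAddGroup.eq_zero_iff g).1 hg)
  intro hbot
  have hmem : χ.comp (QuotientAddGroup.mk' H) ∈ H.dualAnnihilator := fun h hh => by
    simp [(QuotientAddGroup.eq_zero_iff h).2 hh]
  rw [hbot, mem_bot] at hmem
  exact hχ (DFunLike.congr_fun hmem g)

theorem dualCoannihilator_dualAnnihilator_eq {L : AddSubgroup (G →+ 𝕋)}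
    (hL : IsClosed[dualTop G] (L : Set (G →+ 𝕋))) : L.dualCoannihilator.dualAnnihilator = L := by
  refine le_antisymm (fun ψ hψ => ?_) fun φ hφ g hg => hg φ hφ
  let _ := dualTop G
  rw [← SetLike.mem_coe, ← hL.closure_eq]
  refine mem_closure_of_forall_sum_zsmul_eq_zero (e := AddMonoidHom.coeFn G 𝕋) ⟨rfl⟩
    fun s c hc => ?_
  have hsum (φ : G →+ 𝕋) : ∑ i, c i • φ i = φ (∑ i, c i • (i : G)) := by simp
  change ∑ i, c i • ψ i = 0
  rw [hsum]
  exact hψ _ fun φ hφ => (hsum φ).symm.trans (hc φ hφ)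

end AddSubgroup

section tauS

variable {G : Type*} [AddCommGroup G]

theorem tauS_eq_induced (S : AddSubgroup (G →+ 𝕋)) :
    tauS S = TopologicalSpace.induced (AddMonoidHom.pi fun φ : S => (φ : G →+ 𝕋))
      Pi.topologicalSpace := by
  simp only [tauS, Pi.topologicalSpace, induced_iInf, induced_compose]
  rw [iInf_subtype']
  rfl

theorem continuous_tauS_of_mem {S : AddSubgroup (G →+ 𝕋)} {φ : G →+ 𝕋} (hφ : φ ∈ S) :
    Continuous[tauS S, _] φ := by
  rw [continuous_iff_le_induced]
  exact iInf₂_le φ hφ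

theorem mem_closure_tauS_of_forall {S : AddSubgroup (G →+ 𝕋)} {A : AddSubgroup G} {x : G}
    (hx : ∀ ψ ∈ S, (∀ a ∈ A, ψ a = 0) → ψ x = 0) : x ∈ closure[tauS S] (A : Set G) := by
  let _ := tauS S
  refine mem_closure_of_forall_sum_zsmul_eq_zero ⟨tauS_eq_induced S⟩ fun s c hc => ?_
  have hψ : ∑ i, c i • ((i : S) : G →+ 𝕋) ∈ S := sum_mem fun i _ => zsmul_mem (i : S).2 _
  simpa using hx _ hψ fun a ha => by simpa using hc a ha

end tauS

theorem stmt11 {G : Type*} [AddCommGroup G]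
    (S : AddSubgroup (G →+ AddCircle (1 : ℝ))) :
    (∀ H : AddSubgroup G, @Dense G (tauS S) (H : Set G) → H = ⊤) ↔
      ∀ L : AddSubgroup (G →+ AddCircle (1 : ℝ)),
        @IsClosed _ (dualTop G) (L : Set (G →+ AddCircle (1 : ℝ))) → L ≠ ⊥ → S ⊓ L ≠ ⊥ := by
  constructor
  · intro hno_dense L hL hL0 hSL
    have hann : @Dense G (tauS S) (L.dualCoannihilator : Set G) := fun x =>
      mem_closure_tauS_of_forall fun ψ hψS hψ => by
        have hψ0 : ψ ∈ S ⊓ L :=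
          ⟨hψS, (AddSubgroup.dualCoannihilator_dualAnnihilator_eq hL).le hψ⟩
        rw [hSL, AddSubgroup.mem_bot] at hψ0
        rw [hψ0, AddMonoidHom.zero_apply]
    have htop := hno_dense _ hann
    refine hL0 ((AddSubgroup.eq_bot_iff_forall L).2 fun φ hφ => AddMonoidHom.ext fun g => ?_)
    exact (htop ▸ AddSubgroup.mem_top g : g ∈ L.dualCoannihilator) φ hφ
  · intro hess H hH
    by_contra hne
    obtain ⟨ψ, hψ, hψ0⟩ := ((S ⊓ H.dualAnnihilator).bot_or_exists_ne_zero).resolve_left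
      (hess _ (AddSubgroup.isClosed_dualAnnihilator H) (AddSubgroup.dualAnnihilator_ne_bot hne))
    let _ := tauS S
    have hψ_eq : (ψ : G → 𝕋) = 0 :=
      (continuous_tauS_of_mem hψ.1).ext_on hH continuous_const fun h hh => hψ.2 h hh
    exact hψ0 (DFunLike.coe_injective hψ_eq)
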